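/- arXiv:1003.3739 — 4 statements merged into one kernel-verified Lean document; each statement's English description precedes it below -/
import Mathlib

section
/- For positive integers n and m, the map σ_{n,m} satisfies σ_{m,n} ∘ swap ∘ σ_{n,m} ∘ swap = id on Fin m × Fin n, where swap exchanges the two coordinates. Equivalently, R^{(n,m)} τ_{m,n}(R^{(m,n)}) = I, the triangularity relation. -/
/-- `σ_{m,n} ∘ swap ∘ σ_{n,m} ∘ swap = id` on `Fin m × Fin n`,
the triangularity relation `R^{(n,m)} τ_{m,n}(R^{(m,n)}) = I`.
Here `f` plays the role of `σ_{n,m}` and `g` of `σ_{m,n}`, each characterized by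
its defining relation `m·i + j = n·j' + i'` (0-based). -/
theorem sigma_triangularity (n m : ℕ) (hn : 0 < n) (hm : 0 < m)
    (f : Fin n × Fin m → Fin n × Fin m)
    (hf : ∀ p : Fin n × Fin m,
      m * (p.1 : ℕ) + (p.2 : ℕ) = n * ((f p).2 : ℕ) + ((f p).1 : ℕ))
    (g : Fin m × Fin n → Fin m × Fin n)
    (hg : ∀ p : Fin m × Fin n,
      n * (p.1 : ℕ) + (p.2 : ℕ) = m * ((g p).2 : ℕ) + ((g p).1 : ℕ)) :
    ∀ p : Fin m × Fin n, g (Prod.swap (f (Prod.swap p))) = p := by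
  intro p
  have h1 := hf (Prod.swap p)
  have h2 := hg (Prod.swap (f (Prod.swap p)))
  simp only [Prod.fst_swap, Prod.snd_swap] at h1 h2
  set q := g (Prod.swap (f (Prod.swap p))) with hq
  have key : m * (p.2 : ℕ) + (p.1 : ℕ) = m * (q.2 : ℕ) + (q.1 : ℕ) := by
    rw [h1, h2]
  have hmod : ((m * (p.2 : ℕ) + (p.1 : ℕ)) % m) = (p.1 : ℕ) :=
    by rw [Nat.mul_add_mod, Nat.mod_eq_of_lt p.1.isLt]
  have hmod' : ((m * (q.2 : ℕ) + (q.1 : ℕ)) % m) = (q.1 : ℕ) :=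
    by rw [Nat.mul_add_mod, Nat.mod_eq_of_lt q.1.isLt]
  have e1 : (q.1 : ℕ) = (p.1 : ℕ) := by rw [← hmod, ← hmod', key]
  have e2 : (q.2 : ℕ) = (p.2 : ℕ) := by
    have := key
    rw [e1] at this
    have := Nat.add_right_cancel this
    exact (Nat.eq_of_mul_eq_mul_left hm this.symm)
  exact Prod.ext (Fin.ext e1) (Fin.ext e2)
end

section
/- For all positive integers n and m, conjugation by the unitary R^{(n,m)} intertwines φ_{n,m} with the opposite comultiplication: R^{(n,m)} φ_{n,m}(x) (R^{(n,m)})^* = (τ_{m,n} ∘ φ_{m,n})(x) for all x ∈ M_{nm}(ℂ), where τ_{m,n} is the flip M_m(ℂ) ⊗ M_n(ℂ) → M_n(ℂ) ⊗ M_m(ℂ). -/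
/-- The index map `(i,j) ↦ m·i + j : Fin n × Fin m → Fin (n*m)` (0-based form of
`(i,j) ↦ m(i-1)+j`); its inverse is `k ↦ (k div m, k mod m)`. -/
def pairIdx {n m : ℕ} (i : Fin n) (j : Fin m) : Fin (n * m) :=
  ⟨m * (i : ℕ) + (j : ℕ), by
    have hi : (i : ℕ) + 1 ≤ n := i.2
    have hj : (j : ℕ) < m := j.2
    have h1 : m * (i : ℕ) + (j : ℕ) < m * ((i : ℕ) + 1) := by
      rw [Nat.mul_succ]; omega
    have h2 : m * ((i : ℕ) + 1) ≤ m * n := Nat.mul_le_mul le_rfl hi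
    have h3 : m * n = n * m := Nat.mul_comm m n
    omega⟩


/-- `φ : M_{nm}(ℂ) → M_n(ℂ) ⊗ M_m(ℂ)` (Kronecker model `Matrix (Fin n × Fin m)`)
is the matrix-unit isomorphism `φ_{n,m}` iff
`φ(E^{(nm)}_{m(i-1)+j, m(i'-1)+j'}) = E^{(n)}_{i,i'} ⊗ E^{(m)}_{j,j'}`. -/
def IsMatrixUnitHom (n m : ℕ)
    (φ : Matrix (Fin (n * m)) (Fin (n * m)) ℂ →⋆ₐ[ℂ]
      Matrix (Fin n × Fin m) (Fin n × Fin m) ℂ) : Prop :=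
  ∀ (i i' : Fin n) (j j' : Fin m),
    φ (Matrix.single (pairIdx i j) (pairIdx i' j') 1) =
      Matrix.single (i, j) (i', j') 1

/-- The permutation unitary `R^{(n,m)} ∈ M_n(ℂ) ⊗ M_m(ℂ)` (Kronecker model):
`R^{(n,m)} e_i ⊗ e_j = e_{i'} ⊗ e_{j'}` where `m·i + j = n·j' + i'` (0-based),
i.e. the `(p,q)` entry is `1` iff `p = σ_{n,m}(q)`. -/
def Rmat (n m : ℕ) : Matrix (Fin n × Fin m) (Fin n × Fin m) ℂ :=
  fun p q => if m * (q.1 : ℕ) + (q.2 : ℕ) = n * (p.2 : ℕ) + (p.1 : ℕ) then 1 else 0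

/-! `R^{(n,m)}` is the permutation matrix `σ.toPEquiv.toMatrix` (entries `1` exactly at `(p, σ p)`)
of the bijection `σ (i', j') = (i, j)` of `Fin n × Fin m` defined by `m i + j = n j' + i'`, so
conjugating by it reindexes rows and columns along `σ`. The matrix-unit isomorphisms `φ_{n,m}`
and `φ_{m,n}` are themselves reindexings, along the mixed-radix bijections
`Fin n × Fin m ≃ Fin (n m)` and `Fin m × Fin n ≃ Fin (m n)`, and `σ` is exactly the composite of
these and the flip that makes the two sides agree. -/

open Matrix

theorem Matrix.linearMap_eq_reindex_of_single {ι κ R : Type*} [Fintype ι] [DecidableEq ι]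
    [DecidableEq κ] [CommSemiring R] (e : ι ≃ κ) (ψ : Matrix ι ι R →ₗ[R] Matrix κ κ R)
    (hψ : ∀ i j, ψ (single i j 1) = single (e i) (e j) 1) :
    ψ = (reindexLinearEquiv R R e e : Matrix ι ι R →ₗ[R] Matrix κ κ R) :=
  ext_linearMap R fun i j => LinearMap.ext_ring <| by simp [hψ]

theorem PEquiv.conjTranspose_toMatrix {m n α : Type*} [DecidableEq m] [DecidableEq n]
    [NonAssocSemiring α] [StarRing α] (f : m ≃. n) :
    (f.toMatrix : Matrix m n α)ᴴ = f.symm.toMatrix := by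
  ext i j
  simp only [conjTranspose_apply, toMatrix_apply, ← PEquiv.mem_iff_mem f]
  split_ifs <;> simp

theorem Equiv.toMatrix_toPEquiv_mul_mul_conjTranspose {l m α : Type*} [Fintype m]
    [DecidableEq l] [DecidableEq m] [Semiring α] [StarRing α] (σ : l ≃ m) (A : Matrix m m α) :
    (σ.toPEquiv.toMatrix : Matrix l m α) * A * (σ.toPEquiv.toMatrix : Matrix l m α)ᴴ =
      A.submatrix σ σ := by
  rw [PEquiv.conjTranspose_toMatrix, ← Equiv.toPEquiv_symm, PEquiv.toMatrix_toPEquiv_mul,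
    PEquiv.mul_toMatrix_toPEquiv, submatrix_submatrix, Equiv.symm_symm]
  rfl

theorem pairIdx_eq_finProdFinEquiv {n m : ℕ} (i : Fin n) (j : Fin m) :
    pairIdx i j = finProdFinEquiv (i, j) := by
  ext
  simp [pairIdx, add_comm]

theorem IsMatrixUnitHom.apply_eq_reindex {n m : ℕ}
    {φ : Matrix (Fin (n * m)) (Fin (n * m)) ℂ →⋆ₐ[ℂ] Matrix (Fin n × Fin m) (Fin n × Fin m) ℂ}
    (hφ : IsMatrixUnitHom n m φ) (x : Matrix (Fin (n * m)) (Fin (n * m)) ℂ) :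
    φ x = reindex finProdFinEquiv.symm finProdFinEquiv.symm x := by
  refine LinearMap.congr_fun (linearMap_eq_reindex_of_single _ φ.toLinearMap fun k l => ?_) x
  obtain ⟨⟨i, j⟩, rfl⟩ := finProdFinEquiv.surjective k
  obtain ⟨⟨i', j'⟩, rfl⟩ := finProdFinEquiv.surjective l
  rw [Equiv.symm_apply_apply, Equiv.symm_apply_apply, ← pairIdx_eq_finProdFinEquiv,
    ← pairIdx_eq_finProdFinEquiv]
  exact hφ i i' j j'

def Rperm (n m : ℕ) : Fin n × Fin m ≃ Fin n × Fin m :=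
  (Equiv.prodComm _ _).trans
    (finProdFinEquiv.trans ((finCongr (mul_comm m n)).trans finProdFinEquiv.symm))

theorem Rmat_eq_toMatrix_Rperm (n m : ℕ) : Rmat n m = (Rperm n m).toPEquiv.toMatrix := by
  ext p q
  simp only [Rmat, PEquiv.toMatrix_apply, Equiv.toPEquiv_apply, Option.mem_def, Option.some_inj,
    Rperm, Equiv.trans_apply, Equiv.symm_apply_eq, Fin.ext_iff, finProdFinEquiv_apply_val,
    Equiv.prodComm_apply, Prod.fst_swap, Prod.snd_swap, finCongr_apply, Fin.val_cast]
  grind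

theorem Rmat_conj_intertwines_general (n m : ℕ)
    (φnm : Matrix (Fin (n * m)) (Fin (n * m)) ℂ →⋆ₐ[ℂ]
      Matrix (Fin n × Fin m) (Fin n × Fin m) ℂ)
    (hφnm : IsMatrixUnitHom n m φnm)
    (φmn : Matrix (Fin (m * n)) (Fin (m * n)) ℂ →⋆ₐ[ℂ]
      Matrix (Fin m × Fin n) (Fin m × Fin n) ℂ)
    (hφmn : IsMatrixUnitHom m n φmn) :
    ∀ x : Matrix (Fin (n * m)) (Fin (n * m)) ℂ,
      Rmat n m * φnm x * star (Rmat n m) =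
        Matrix.reindex (Equiv.prodComm (Fin m) (Fin n)) (Equiv.prodComm (Fin m) (Fin n))
          (φmn (Matrix.reindex (finCongr (mul_comm n m)) (finCongr (mul_comm n m)) x)) := by
  intro x
  rw [star_eq_conjTranspose, Rmat_eq_toMatrix_Rperm, Equiv.toMatrix_toPEquiv_mul_mul_conjTranspose,
    hφnm.apply_eq_reindex, hφmn.apply_eq_reindex]
  ext p q
  simp only [reindex_apply, submatrix_apply, Rperm, Equiv.trans_apply, Equiv.symm_symm,
    Equiv.apply_symm_apply]
  rfl

/-- Conjugation by the unitary `R^{(n,m)}` intertwines `φ_{n,m}` with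
the opposite comultiplication: `R^{(n,m)} φ_{n,m}(x) (R^{(n,m)})* = (τ_{m,n} ∘ φ_{m,n})(x)`
for all `x ∈ M_{nm}(ℂ)`, where `τ_{m,n}` is the flip `M_m ⊗ M_n → M_n ⊗ M_m`
(Kronecker model: reindexing by `Equiv.prodComm`), and `M_{nm} = M_{mn}` via `finCongr`. -/
theorem Rmat_conj_intertwines (n m : ℕ) (hn : 0 < n) (hm : 0 < m)
    (φnm : Matrix (Fin (n * m)) (Fin (n * m)) ℂ →⋆ₐ[ℂ]
      Matrix (Fin n × Fin m) (Fin n × Fin m) ℂ)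
    (hφnm : IsMatrixUnitHom n m φnm)
    (φmn : Matrix (Fin (m * n)) (Fin (m * n)) ℂ →⋆ₐ[ℂ]
      Matrix (Fin m × Fin n) (Fin m × Fin n) ℂ)
    (hφmn : IsMatrixUnitHom m n φmn) :
    ∀ x : Matrix (Fin (n * m)) (Fin (n * m)) ℂ,
      Rmat n m * φnm x * star (Rmat n m) =
        Matrix.reindex (Equiv.prodComm (Fin m) (Fin n)) (Equiv.prodComm (Fin m) (Fin n))
          (φmn (Matrix.reindex (finCongr (mul_comm n m)) (finCongr (mul_comm n m)) x)) :=
  Rmat_conj_intertwines_general n m φnm hφnm φmn hφmn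
end

section
/- The family {R^{(n,m)}} satisfies the hexagon (quasi-triangularity) relation (φ_{n,m} ⊗ id_l)(R^{(nm,l)}) = R^{(n,l)}_{13} R^{(m,l)}_{23} in M_n(ℂ) ⊗ M_m(ℂ) ⊗ M_l(ℂ), for all positive integers n, m, l. -/
/-- `φ ⊗ id_α` in the Kronecker model. -/
def tensorId {α β γ : Type*} (φ : Matrix β β ℂ → Matrix γ γ ℂ)
    (M : Matrix (β × α) (β × α) ℂ) : Matrix (γ × α) (γ × α) ℂ :=
  fun p q => φ (fun b b' => M (b, p.2) (b', q.2)) p.1 q.1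

/-- The leg `R^{(n,l)}_{13}` in `M_n ⊗ M_m ⊗ M_l` (Kronecker model,
indices `(Fin n × Fin m) × Fin l`). -/
def R13 (n m l : ℕ) : Matrix ((Fin n × Fin m) × Fin l) ((Fin n × Fin m) × Fin l) ℂ :=
  fun p q => Rmat n l (p.1.1, p.2) (q.1.1, q.2) * (if p.1.2 = q.1.2 then 1 else 0)

/-- The leg `R^{(m,l)}_{23}` in `M_n ⊗ M_m ⊗ M_l`. -/
def R23 (n m l : ℕ) : Matrix ((Fin n × Fin m) × Fin l) ((Fin n × Fin m) × Fin l) ℂ :=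
  fun p q => Rmat m l (p.1.2, p.2) (q.1.2, q.2) * (if p.1.1 = q.1.1 then 1 else 0)


theorem Fintype.sum_boole_eq_ite_exists {ι R : Type*} [Fintype ι] [AddCommMonoidWithOne R]
    {P : ι → Prop} [DecidablePred P] (hP : ∀ i j, P i → P j → i = j) :
    (∑ i, if P i then (1 : R) else 0) = if ∃ i, P i then 1 else 0 := by
  split_ifs with h
  · obtain ⟨i, hi⟩ := h
    rw [Fintype.sum_eq_single i fun j hj => if_neg fun hPj => hj (hP j i hPj hi), if_pos hi]
  · exact Finset.sum_eq_zero fun i _ => if_neg fun hi => h ⟨i, hi⟩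

theorem Nat.mul_add_eq_mul_add_iff_exists_carry {l m N a' b' b c' : ℕ} (hb : b < m) (hb' : b' < m)
    (hc' : c' < l) :
    l * (m * a' + b') + c' = m * N + b ↔
      ∃ z < l, l * b' + c' = m * z + b ∧ l * a' + z = N := by
  constructor
  · intro h
    have hN : l * a' ≤ N := by
      by_contra! hlt
      nlinarith
    obtain ⟨z, rfl⟩ := Nat.exists_eq_add_of_le hN
    have hz : l * b' + c' = m * z + b := by linarith
    refine ⟨z, ?_, hz, rfl⟩
    by_contra! hle
    nlinarith
  · rintro ⟨z, -, hz, rfl⟩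
    linarith

theorem Matrix.linearMap_eq_reindex_of_map_single {ι κ R : Type*} [Fintype ι] [DecidableEq ι]
    [DecidableEq κ] [Semiring R] (f : Matrix ι ι R →ₗ[R] Matrix κ κ R) (e : κ ≃ ι)
    (hf : ∀ p q, f (Matrix.single (e p) (e q) 1) = Matrix.single p q 1) (M : Matrix ι ι R) :
    f M = Matrix.reindex e.symm e.symm M := by
  refine LinearMap.congr_fun (g := (Matrix.reindexLinearEquiv R R e.symm e.symm).toLinearMap)
    (Matrix.ext_linearMap R fun i j => LinearMap.ext fun x => ?_) M
  obtain ⟨p, rfl⟩ := e.surjective i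
  obtain ⟨q, rfl⟩ := e.surjective j
  have hx : Matrix.single (e p) (e q) x = x • Matrix.single (e p) (e q) 1 := by
    rw [Matrix.smul_single, smul_eq_mul, mul_one]
  simp only [LinearMap.comp_apply, Matrix.singleLinearMap_apply, hx, map_smul, hf]
  simp

theorem finProdFinEquiv_apply_eq_pairIdx {n m : ℕ} (x : Fin n × Fin m) :
    finProdFinEquiv x = pairIdx x.1 x.2 :=
  Fin.ext (Nat.add_comm _ _)

theorem IsMatrixUnitHom.apply {n m : ℕ}
    {φ : Matrix (Fin (n * m)) (Fin (n * m)) ℂ →⋆ₐ[ℂ]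
      Matrix (Fin n × Fin m) (Fin n × Fin m) ℂ}
    (hφ : IsMatrixUnitHom n m φ) (M : Matrix (Fin (n * m)) (Fin (n * m)) ℂ)
    (p q : Fin n × Fin m) :
    φ M p q = M (pairIdx p.1 p.2) (pairIdx q.1 q.2) := by
  have hreindex := Matrix.linearMap_eq_reindex_of_map_single φ.toLinearMap finProdFinEquiv
    (fun p q => by simpa [finProdFinEquiv_apply_eq_pairIdx] using hφ p.1 q.1 p.2 q.2) M
  simpa [finProdFinEquiv_apply_eq_pairIdx] using congrFun (congrFun hreindex p) q

theorem tensorId_Rmat_apply {n m l : ℕ}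
    {φ : Matrix (Fin (n * m)) (Fin (n * m)) ℂ →⋆ₐ[ℂ]
      Matrix (Fin n × Fin m) (Fin n × Fin m) ℂ}
    (hφ : IsMatrixUnitHom n m φ) (a a' : Fin n) (b b' : Fin m) (c c' : Fin l) :
    tensorId φ (Rmat (n * m) l) ((a, b), c) ((a', b'), c') =
      if l * (m * (a' : ℕ) + b') + c' = m * (n * c + a) + b then 1 else 0 := by
  rw [tensorId]
  refine (hφ.apply _ _ _).trans ?_
  simp only [Rmat, pairIdx]
  congr 2
  ring

theorem R13_mul_R23_apply (n m l : ℕ) (a a' : Fin n) (b b' : Fin m) (c c' : Fin l) :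
    (R13 n m l * R23 n m l) ((a, b), c) ((a', b'), c') =
      ∑ z : Fin l,
        if l * (b' : ℕ) + c' = m * z + b ∧ l * (a' : ℕ) + z = n * c + a then 1 else 0 := by
  rw [Matrix.mul_apply, Fintype.sum_prod_type, Fintype.sum_eq_single (a', b)]
  · simp [R13, R23, Rmat, ite_and]
  · rintro ⟨x, y⟩ hxy
    refine Finset.sum_eq_zero fun z _ => ?_
    rw [Ne, Prod.mk.injEq, not_and_or] at hxy
    simp only [R13, R23]
    rcases hxy with hx | hy
    · simp [hx]
    · simp [Ne.symm hy]

theorem Rmat_hexagon_one_general (n m l : ℕ)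
    (φnm : Matrix (Fin (n * m)) (Fin (n * m)) ℂ →⋆ₐ[ℂ]
      Matrix (Fin n × Fin m) (Fin n × Fin m) ℂ)
    (hφnm : IsMatrixUnitHom n m φnm) :
    tensorId (⇑φnm) (Rmat (n * m) l) = R13 n m l * R23 n m l := by
  ext ⟨⟨a, b⟩, c⟩ ⟨⟨a', b'⟩, c'⟩
  have carry_unique : ∀ z z' : Fin l, l * (a' : ℕ) + z = n * c + a →
      l * (a' : ℕ) + z' = n * c + a → z = z' := fun z z' hz hz' => Fin.ext (by omega)
  rw [tensorId_Rmat_apply hφnm, R13_mul_R23_apply,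
    Fintype.sum_boole_eq_ite_exists fun z z' hz hz' => carry_unique z z' hz.2 hz'.2]
  simp only [Nat.mul_add_eq_mul_add_iff_exists_carry b.2 b'.2 c'.2, Fin.exists_iff, exists_prop]

/-- The first hexagon (quasi-triangularity) relation
`(φ_{n,m} ⊗ id_l)(R^{(nm,l)}) = R^{(n,l)}_{13} R^{(m,l)}_{23}`
in `M_n(ℂ) ⊗ M_m(ℂ) ⊗ M_l(ℂ)` (Kronecker model). -/
theorem Rmat_hexagon_one (n m l : ℕ) (hn : 0 < n) (hm : 0 < m) (hl : 0 < l)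
    (φnm : Matrix (Fin (n * m)) (Fin (n * m)) ℂ →⋆ₐ[ℂ]
      Matrix (Fin n × Fin m) (Fin n × Fin m) ℂ)
    (hφnm : IsMatrixUnitHom n m φnm) :
    tensorId (⇑φnm) (Rmat (n * m) l) = R13 n m l * R23 n m l :=
  Rmat_hexagon_one_general n m l φnm hφnm
end

section
/- Suppose φ : C → A ⊗ B is a *-homomorphism of unital *-algebras and R ∈ A ⊗ B is a unitary with R φ(x) R* = (τ ∘ φ')(x) for all x ∈ C, where φ' : C → B ⊗ A is a *-homomorphism and τ : B ⊗ A → A ⊗ B is the flip. Define φ^{(n)} = T^{(n)}_{A,B} ∘ φ^{⊗n} : C^{⊗n} → A^{⊗n} ⊗ B^{⊗n} and R^{(n)} = T^{(n)}_{A,B}(R^{⊗n}). Then R^{(n)} is unitary and R^{(n)} φ^{(n)}(x) (R^{(n)})^* = (τ^{(n)} ∘ (φ')^{(n)})(x) for all x ∈ C^{⊗n}. -/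
open scoped TensorProduct
open PiTensorProduct

set_option synthInstance.maxHeartbeats 1000000
set_option maxHeartbeats 2000000

/-- If `φ : C → A ⊗ B` is a `*`-homomorphism and `R ∈ A ⊗ B` a unitary
with `R φ(x) R* = (τ ∘ φ')(x)` for all `x ∈ C` (where `φ' : C → B ⊗ A` is a
`*`-homomorphism and `τ : B ⊗ A → A ⊗ B` the flip), then
`φ^{(n)} = T^{(n)}_{A,B} ∘ φ^{⊗n}` and `R^{(n)} = T^{(n)}_{A,B}(R^{⊗n})` satisfy:
`R^{(n)}` is unitary and `R^{(n)} φ^{(n)}(x) (R^{(n)})* = (τ^{(n)} ∘ (φ')^{(n)})(x)`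
for all `x ∈ C^{⊗n}`.  Tensor powers are `PiTensorProduct`s over `Fin n`; the
reordering maps `T^{(n)}`, the componentwise powers `φ^{⊗n}`, `(φ')^{⊗n}`, and the
star operations on the tensor products (not available as instances in Mathlib) are
characterized on elementary tensors by hypotheses. -/
theorem componentwise_power_quasi_cocommutative
    (A B C : Type*) [Ring A] [Algebra ℂ A] [StarRing A] [StarModule ℂ A]
    [Ring B] [Algebra ℂ B] [StarRing B] [StarModule ℂ B]
    [Ring C] [Algebra ℂ C] [StarRing C] [StarModule ℂ C] (n : ℕ)
    [StarRing (A ⊗[ℂ] B)]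
    (hstAB : ∀ (a : A) (b : B), star (a ⊗ₜ[ℂ] b) = star a ⊗ₜ[ℂ] star b)
    [StarRing ((⨂[ℂ] _ : Fin n, A) ⊗[ℂ] (⨂[ℂ] _ : Fin n, B))]
    (hstPow : ∀ (x : Fin n → A) (y : Fin n → B),
      star ((tprod ℂ x) ⊗ₜ[ℂ] (tprod ℂ y)) =
        (tprod ℂ fun i => star (x i)) ⊗ₜ[ℂ] (tprod ℂ fun i => star (y i)))
    (φ : C →ₐ[ℂ] A ⊗[ℂ] B) (hφstar : ∀ x : C, φ (star x) = star (φ x))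
    (φ' : C →ₐ[ℂ] B ⊗[ℂ] A)
    (R : A ⊗[ℂ] B) (hR1 : star R * R = 1) (hR2 : R * star R = 1)
    (hR : ∀ x : C, R * φ x * star R = (Algebra.TensorProduct.comm ℂ B A) (φ' x))
    (TAB : (⨂[ℂ] _ : Fin n, (A ⊗[ℂ] B)) →ₐ[ℂ]
      (⨂[ℂ] _ : Fin n, A) ⊗[ℂ] (⨂[ℂ] _ : Fin n, B))
    (hTAB : ∀ (x : Fin n → A) (y : Fin n → B),
      TAB (tprod ℂ fun i => x i ⊗ₜ[ℂ] y i) = (tprod ℂ x) ⊗ₜ[ℂ] (tprod ℂ y))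
    (TBA : (⨂[ℂ] _ : Fin n, (B ⊗[ℂ] A)) →ₐ[ℂ]
      (⨂[ℂ] _ : Fin n, B) ⊗[ℂ] (⨂[ℂ] _ : Fin n, A))
    (hTBA : ∀ (y : Fin n → B) (x : Fin n → A),
      TBA (tprod ℂ fun i => y i ⊗ₜ[ℂ] x i) = (tprod ℂ y) ⊗ₜ[ℂ] (tprod ℂ x))
    (φpow : (⨂[ℂ] _ : Fin n, C) →ₐ[ℂ] ⨂[ℂ] _ : Fin n, (A ⊗[ℂ] B))
    (hφpow : ∀ x : Fin n → C, φpow (tprod ℂ x) = tprod ℂ fun i => φ (x i))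
    (φ'pow : (⨂[ℂ] _ : Fin n, C) →ₐ[ℂ] ⨂[ℂ] _ : Fin n, (B ⊗[ℂ] A))
    (hφ'pow : ∀ x : Fin n → C, φ'pow (tprod ℂ x) = tprod ℂ fun i => φ' (x i)) :
    star (TAB (tprod ℂ fun _ => R)) * TAB (tprod ℂ fun _ => R) = 1 ∧
    TAB (tprod ℂ fun _ => R) * star (TAB (tprod ℂ fun _ => R)) = 1 ∧
    ∀ x : ⨂[ℂ] _ : Fin n, C,
      TAB (tprod ℂ fun _ => R) * TAB (φpow x) * star (TAB (tprod ℂ fun _ => R)) =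
        (Algebra.TensorProduct.comm ℂ (⨂[ℂ] _ : Fin n, B) (⨂[ℂ] _ : Fin n, A))
          (TBA (φ'pow x)) := by
  classical
  -- Key lemma A: star commutes with TAB ∘ tprod componentwise
  have keyA : ∀ z : Fin n → (A ⊗[ℂ] B),
      star (TAB (PiTensorProduct.tprod ℂ z)) = TAB (PiTensorProduct.tprod ℂ fun i => star (z i)) := by
    intro z
    choose S hS using fun i => TensorProduct.exists_finset (z i)
    have h1 : PiTensorProduct.tprod ℂ z = ∑ r ∈ Fintype.piFinset S,
        PiTensorProduct.tprod ℂ (fun i => (r i).1 ⊗ₜ[ℂ] (r i).2) := by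
      conv_lhs => rw [show z = fun i => ∑ p ∈ S i, p.1 ⊗ₜ[ℂ] p.2 from funext hS]
      exact (PiTensorProduct.tprod ℂ).map_sum_finset _ _
    have h2 : (fun i => star (z i)) = fun i => ∑ p ∈ S i,
        (star p.1) ⊗ₜ[ℂ] (star p.2) := by
      funext i
      rw [hS i, star_sum]
      exact Finset.sum_congr rfl fun p _ => hstAB _ _
    rw [h1, map_sum, star_sum, h2, (PiTensorProduct.tprod ℂ).map_sum_finset, map_sum]
    refine Finset.sum_congr rfl fun r _ => ?_
    rw [hTAB, hTAB, hstPow]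
  -- Key lemma B: TAB ∘ (componentwise comm) = comm ∘ TBA
  have keyB : ∀ z : Fin n → (B ⊗[ℂ] A),
      TAB (PiTensorProduct.tprod ℂ fun i => (Algebra.TensorProduct.comm ℂ B A) (z i)) =
        (Algebra.TensorProduct.comm ℂ (⨂[ℂ] _ : Fin n, B) (⨂[ℂ] _ : Fin n, A))
          (TBA (PiTensorProduct.tprod ℂ z)) := by
    intro z
    choose S hS using fun i => TensorProduct.exists_finset (z i)
    have h1 : PiTensorProduct.tprod ℂ z = ∑ r ∈ Fintype.piFinset S,
        PiTensorProduct.tprod ℂ (fun i => (r i).1 ⊗ₜ[ℂ] (r i).2) := by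
      conv_lhs => rw [show z = fun i => ∑ p ∈ S i, p.1 ⊗ₜ[ℂ] p.2 from funext hS]
      exact (PiTensorProduct.tprod ℂ).map_sum_finset _ _
    have h2 : (fun i => (Algebra.TensorProduct.comm ℂ B A) (z i)) =
        fun i => ∑ p ∈ S i, p.2 ⊗ₜ[ℂ] p.1 := by
      funext i
      rw [hS i, map_sum]
      exact Finset.sum_congr rfl fun p _ => Algebra.TensorProduct.comm_tmul ..
    rw [h1, map_sum, map_sum, h2, (PiTensorProduct.tprod ℂ).map_sum_finset, map_sum]
    refine Finset.sum_congr rfl fun r _ => ?_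
    rw [hTAB, hTBA, Algebra.TensorProduct.comm_tmul]
  have hstar : star (TAB (PiTensorProduct.tprod ℂ fun _ => R)) =
      TAB (PiTensorProduct.tprod ℂ fun _ => star R) := keyA _
  have hmul : ∀ u v : Fin n → (A ⊗[ℂ] B),
      TAB (PiTensorProduct.tprod ℂ u) * TAB (PiTensorProduct.tprod ℂ v) =
        TAB (PiTensorProduct.tprod ℂ (fun i => u i * v i)) := by
    intro u v
    rw [← _root_.map_mul, PiTensorProduct.tprod_mul_tprod]
    rfl
  have hone : TAB (PiTensorProduct.tprod ℂ fun _ => (1 : A ⊗[ℂ] B)) = 1 := by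
    have h1 : (PiTensorProduct.tprod ℂ fun _ : Fin n => (1 : A ⊗[ℂ] B)) = 1 :=
      PiTensorProduct.one_def.symm
    rw [h1, _root_.map_one]
  refine ⟨?_, ?_, ?_⟩
  · rw [hstar, hmul]
    simp only [hR1]
    exact hone
  · rw [hstar, hmul]
    simp only [hR2]
    exact hone
  · intro x
    induction x using PiTensorProduct.induction_on with
    | smul_tprod c z =>
      simp only [map_smul, hφpow, hφ'pow, mul_smul_comm, smul_mul_assoc]
      congr 1
      rw [hstar, hmul, hmul]
      have h2 : (fun i => R * φ (z i) * star R) =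
          fun i => (Algebra.TensorProduct.comm ℂ B A) (φ' (z i)) :=
        funext fun i => hR (z i)
      calc TAB (PiTensorProduct.tprod ℂ fun i => R * φ (z i) * star R)
          = TAB (PiTensorProduct.tprod ℂ
              fun i => (Algebra.TensorProduct.comm ℂ B A) (φ' (z i))) := by rw [h2]
        _ = _ := keyB _
    | add u v hu hv =>
      simp only [map_add, mul_add, add_mul, hu, hv]
end
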